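/- arXiv:1307.2667 — 3 statements merged into one kernel-verified Lean document; each statement's English description precedes it below -/
import Mathlib

section
/- Let (T, F) be a torsion pair in the category of finite-dimensional representations of a quiver Q over a finite field. Then in the completed Hall algebra H(Q), the identity χ = χ(F)·χ(T) holds, where χ(C) denotes the formal sum of all isomorphism classes of objects in a subcategory C, and χ = χ(mod kQ). -/
namespace QP

structure FQuiver where
  V : Type
  E : Type
  [fV : Fintype V]
  [fE : Fintype E]
  [dV : DecidableEq V]
  [dE : DecidableEq E]
  src : E → V
  tgt : E → V

attribute [instance] FQuiver.fV FQuiver.fE FQuiver.dV FQuiver.dE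

variable (Q : FQuiver) (K : Type) [Field K] [Fintype K]

/-- A finite-dimensional representation of the quiver `Q` over `K`. -/
structure Rep where
  d : Q.V → ℕ
  m : ∀ e : Q.E, (Fin (d (Q.src e)) → K) →ₗ[K] (Fin (d (Q.tgt e)) → K)

variable {Q K}

/-- Morphisms of representations. -/
structure Hom (M N : Rep Q K) where
  f : ∀ v, (Fin (M.d v) → K) →ₗ[K] (Fin (N.d v) → K)
  comm : ∀ e, (f (Q.tgt e)).comp (M.m e) = (N.m e).comp (f (Q.src e))

def Hom.IsIso {M N : Rep Q K} (φ : Hom M N) : Prop := ∀ v, Function.Bijective (φ.f v)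

/-- Isomorphism of representations. -/
def repIso (M N : Rep Q K) : Prop := ∃ φ : Hom M N, φ.IsIso

/-- The number of automorphisms `a_M = |Aut(M)|`. -/
noncomputable def aut (M : Rep Q K) : ℕ := Nat.card {φ : Hom M M // φ.IsIso}

/-- `ι, π` form a short exact sequence `0 → V' → W → U → 0`. -/
def IsExactPair {V' W U : Rep Q K} (ι : Hom V' W) (π : Hom W U) : Prop :=
  ∀ v, Function.Injective (ι.f v) ∧ Function.Surjective (π.f v) ∧
    LinearMap.range (ι.f v) = LinearMap.ker (π.f v)

/-- Number of exact pairs `0 → V' → W → U → 0`; equals `F^W_{U V'} · a_U · a_{V'}`. -/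
noncomputable def epairs (U V' W : Rep Q K) : ℕ :=
  Nat.card {p : Hom V' W × Hom W U // IsExactPair p.1 p.2}

variable (Q K) in
/-- Representations with a fixed dimension vector. -/
def RepOf (d : Q.V → ℕ) := ∀ e : Q.E, (Fin (d (Q.src e)) → K) →ₗ[K] (Fin (d (Q.tgt e)) → K)

def RepOf.toRep {d : Q.V → ℕ} (m : RepOf Q K d) : Rep Q K := ⟨d, m⟩

variable (Q K) in
/-- `|GL_d| = ∏_v |GL_{d v}(K)|`. -/
noncomputable def glcard (d : Q.V → ℕ) : ℕ :=
  ∏ v : Q.V, Nat.card ((Fin (d v) → K) ≃ₗ[K] (Fin (d v) → K))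

/-- A Hall-algebra element constant on isomorphism classes. -/
def IsoInvariant (h : Rep Q K → ℚ) : Prop := ∀ M N, repIso M N → h M = h N

/-- The Hall product.  For iso-invariant `h₁ h₂` this computes
`([U][V] = ∑_W F^W_{UV}[W])`-multiplication, coefficientwise:
`(h₁ * h₂)(W) = ∑_{[U],[V]} h₁(U) h₂(V) F^W_{UV}`, using that the number of exact
pairs is `F^W_{UV} a_U a_V` and that each iso class of dimension `δ` has
`glcard δ / a` objects. -/
noncomputable def hmul (h₁ h₂ : Rep Q K → ℚ) : Rep Q K → ℚ := fun W =>
  ∑ᶠ (δ : Q.V → ℕ) (_ : ∀ v, δ v ≤ W.d v) (mV : RepOf Q K δ)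
      (mU : RepOf Q K fun v => W.d v - δ v),
    h₁ mU.toRep * h₂ mV.toRep * (epairs mU.toRep mV.toRep W : ℚ) /
      ((glcard Q K δ : ℚ) * (glcard Q K fun v => W.d v - δ v))

/-- The unit `[0]` of the Hall algebra. -/
noncomputable def hone : Rep Q K → ℚ := fun W => if W.d = fun _ => 0 then 1 else 0

open Classical in
/-- `χ(𝒞) = ∑_{M ∈ 𝒞} [M]` for a (iso-closed) subcategory cut out by `P`. -/
noncomputable def chi (P : Rep Q K → Prop) : Rep Q K → ℚ := fun M => if P M then 1 else 0

end QP

/-!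
Fix `W` and its torsion sequence `0 → L → W → N → 0`. Since `Hom(T, F) = 0`, every short exact
sequence `0 → V → W → U → 0` with `V ∈ T` and `U ∈ F` has the same image `L` and the same
kernel, so the exact pairs weighted by the coefficient of `[W]` in `χ(F)·χ(T)` are exactly the
pairs (monomorphism `V → W` onto `L`, epimorphism `W → U` with kernel `L`). Summed over all
structures `V` on `K^{dim L}` and `U` on `K^{dim N}`, these choices are torsors under
`GL_{dim L}` and `GL_{dim N}`, which is exactly the normalisation in `hmul`; the coefficient is 1.
-/

namespace QP

open LinearMap

instance {R M N : Type*} [Semiring R] [AddCommMonoid M] [AddCommMonoid N] [Module R M]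
    [Module R N] [Finite M] [Finite N] : Finite (M →ₗ[R] N) :=
  Finite.of_injective _ DFunLike.coe_injective

instance {R M N : Type*} [Semiring R] [AddCommMonoid M] [AddCommMonoid N] [Module R M]
    [Module R N] [Finite M] [Finite N] : Finite (M ≃ₗ[R] N) :=
  Finite.of_injective _ DFunLike.coe_injective

variable {Q : FQuiver} {K : Type} [Field K]

@[ext]
theorem Hom.ext {M N : Rep Q K} {φ ψ : Hom M N} (h : ∀ v, φ.f v = ψ.f v) : φ = ψ := by
  obtain ⟨f, _⟩ := φ
  obtain ⟨g, _⟩ := ψ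
  congr
  exact funext h

instance [Fintype K] {M N : Rep Q K} : Finite (Hom M N) :=
  Finite.of_injective Hom.f fun _ _ h => Hom.ext (congrFun h)

instance [Fintype K] {d : Q.V → ℕ} : Finite (RepOf Q K d) :=
  inferInstanceAs (Finite (∀ e : Q.E, (Fin (d (Q.src e)) → K) →ₗ[K] (Fin (d (Q.tgt e)) → K)))

theorem glcard_pos [Fintype K] (d : Q.V → ℕ) : 0 < glcard Q K d :=
  Finset.prod_pos fun _ _ => Nat.card_pos_iff.mpr ⟨⟨LinearEquiv.refl K _⟩, inferInstance⟩

theorem Hom.comm_apply {M N : Rep Q K} (φ : Hom M N) (e : Q.E) (x : Fin (M.d (Q.src e)) → K) :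
    φ.f (Q.tgt e) (M.m e x) = N.m e (φ.f (Q.src e) x) :=
  DFunLike.congr_fun (φ.comm e) x

def Hom.comp {A B C : Rep Q K} (g : Hom B C) (f : Hom A B) : Hom A C :=
  ⟨fun v => g.f v ∘ₗ f.f v, fun e => by
    rw [LinearMap.comp_assoc, f.comm e, ← LinearMap.comp_assoc, g.comm e, LinearMap.comp_assoc]⟩

theorem IsExactPair.d_add {V W U : Rep Q K} {ι : Hom V W} {π : Hom W U} (h : IsExactPair ι π)
    (v : Q.V) : V.d v + U.d v = W.d v := by
  have := finrank_range_add_finrank_ker (π.f v)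
  rw [range_eq_top.mpr (h v).2.1, ← (h v).2.2, finrank_range_of_inj (h v).1] at this
  simpa [add_comm] using this

section Transport

variable (L : Rep Q K) {d : Q.V → ℕ} (α : ∀ v, (Fin (d v) → K) ≃ₗ[K] (Fin (L.d v) → K))

def transportRep : RepOf Q K d :=
  fun e => (α (Q.tgt e)).symm.toLinearMap ∘ₗ L.m e ∘ₗ (α (Q.src e)).toLinearMap

def transportHom : Hom (transportRep L α).toRep L :=
  ⟨fun v => (α v).toLinearMap, fun e => LinearMap.ext fun x => by
    simp [transportRep, RepOf.toRep]⟩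

def transportHomInv : Hom L (transportRep L α).toRep :=
  ⟨fun v => (α v).symm.toLinearMap, fun e => LinearMap.ext fun x =>
    show (α _).symm (L.m e x) = (α _).symm (L.m e (α _ ((α _).symm x))) by
      rw [LinearEquiv.apply_symm_apply]⟩

end Transport

variable {L M N W : Rep Q K}

def SameSubobject (ι₀ : Hom L W) (ι : Hom M W) : Prop :=
  ∀ v, Function.Injective (ι.f v) ∧ range (ι.f v) = range (ι₀.f v)

def SameQuotient (π₀ : Hom W N) (π : Hom W M) : Prop :=
  ∀ v, Function.Surjective (π.f v) ∧ ker (π.f v) = ker (π₀.f v)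

namespace SameSubobject

variable {ι₀ : Hom L W} {ι : Hom M W} (hι₀ : ∀ v, Function.Injective (ι₀.f v))
  (h : SameSubobject ι₀ ι)
include hι₀ h

noncomputable def equiv (v : Q.V) : (Fin (M.d v) → K) ≃ₗ[K] (Fin (L.d v) → K) :=
  (LinearEquiv.ofInjective _ (h v).1).trans
    ((LinearEquiv.ofEq _ _ (h v).2).trans (LinearEquiv.ofInjective _ (hι₀ v)).symm)

theorem apply_equiv (v : Q.V) (x : Fin (M.d v) → K) : ι₀.f v (equiv hι₀ h v x) = ι.f v x := by
  simp [equiv]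

noncomputable def hom : Hom M L :=
  ⟨fun v => equiv hι₀ h v, fun e => LinearMap.ext fun x => by
    apply hι₀
    simp [apply_equiv, Hom.comm_apply]⟩

theorem repIso : repIso M L := ⟨hom hι₀ h, fun v => (equiv hι₀ h v).bijective⟩

theorem d_eq : M.d = L.d :=
  funext fun v => by simpa using (equiv hι₀ h v).finrank_eq

end SameSubobject

namespace SameQuotient

variable {π₀ : Hom W N} {π : Hom W M} (hπ₀ : ∀ v, Function.Surjective (π₀.f v))
  (h : SameQuotient π₀ π)
include hπ₀ h

noncomputable def equiv (v : Q.V) : (Fin (N.d v) → K) ≃ₗ[K] (Fin (M.d v) → K) :=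
  (quotKerEquivOfSurjective _ (hπ₀ v)).symm.trans
    ((Submodule.quotEquivOfEq _ _ (h v).2.symm).trans (quotKerEquivOfSurjective _ (h v).1))

theorem equiv_apply (v : Q.V) (x : Fin (W.d v) → K) : equiv hπ₀ h v (π₀.f v x) = π.f v x := by
  simp [equiv]

noncomputable def hom : Hom N M :=
  ⟨fun v => equiv hπ₀ h v, fun e => LinearMap.ext fun y => by
    obtain ⟨x, rfl⟩ := hπ₀ _ y
    simp [equiv_apply, ← Hom.comm_apply]⟩

theorem repIso : repIso N M := ⟨hom hπ₀ h, fun v => (equiv hπ₀ h v).bijective⟩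

end SameQuotient

theorem RepOf.eq_of_injective_hom {d : Q.V → ℕ} {m m' : RepOf Q K d} (ι : Hom m.toRep W)
    (ι' : Hom m'.toRep W) (hι : ∀ v, Function.Injective (ι.f v)) (h : ∀ v, ι.f v = ι'.f v) :
    m = m' :=
  funext fun e => LinearMap.ext fun x => hι _ <| by
    have := ι'.comm_apply e x
    rw [← h, ← h] at this
    exact (ι.comm_apply e x).trans this.symm

theorem RepOf.eq_of_surjective_hom {d : Q.V → ℕ} {m m' : RepOf Q K d} (π : Hom W m.toRep)
    (π' : Hom W m'.toRep) (hπ : ∀ v, Function.Surjective (π.f v)) (h : ∀ v, π.f v = π'.f v) :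
    m = m' :=
  funext fun e => LinearMap.ext fun y => by
    obtain ⟨x, rfl⟩ := hπ _ y
    have := π'.comm_apply e x
    rw [← h, ← h] at this
    exact (π.comm_apply e x).symm.trans this

theorem card_sameSubobject {ι₀ : Hom L W} (hι₀ : ∀ v, Function.Injective (ι₀.f v)) :
    Nat.card (Σ m : RepOf Q K L.d, {ι : Hom m.toRep W // SameSubobject ι₀ ι}) =
      glcard Q K L.d := by
  rw [glcard, ← Nat.card_pi]
  refine Nat.card_congr (Equiv.ofBijective (fun s v => s.2.2.equiv hι₀ v) ⟨?_, fun α => ?_⟩)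
  · rintro ⟨m, ι, hι⟩ ⟨m', ι', hι'⟩ hα
    have hf : ∀ v, ι.f v = ι'.f v := fun v => LinearMap.ext fun x =>
      (hι.apply_equiv hι₀ v x).symm.trans <|
        (congrArg (ι₀.f v) (LinearEquiv.congr_fun (congrFun hα v) x)).trans
          (hι'.apply_equiv hι₀ v x)
    obtain rfl := RepOf.eq_of_injective_hom ι ι' (fun v => (hι v).1) hf
    exact Sigma.ext rfl (heq_of_eq (Subtype.ext (Hom.ext hf)))
  · refine ⟨⟨transportRep L α, ι₀.comp (transportHom L α),
      fun v => ⟨(hι₀ v).comp (α v).injective, LinearEquiv.range_comp _ _⟩⟩, ?_⟩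
    funext v
    exact LinearEquiv.ext fun x => hι₀ v (SameSubobject.apply_equiv hι₀ _ v x)

theorem card_sameQuotient {π₀ : Hom W N} (hπ₀ : ∀ v, Function.Surjective (π₀.f v)) :
    Nat.card (Σ m : RepOf Q K N.d, {π : Hom W m.toRep // SameQuotient π₀ π}) =
      glcard Q K N.d := by
  rw [glcard, ← Nat.card_pi]
  refine Nat.card_congr (Equiv.ofBijective (fun s v => s.2.2.equiv hπ₀ v) ⟨?_, fun β => ?_⟩)
  · rintro ⟨m, π, hπ⟩ ⟨m', π', hπ'⟩ hβ
    have hf : ∀ v, π.f v = π'.f v := fun v => LinearMap.ext fun x =>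
      (hπ.equiv_apply hπ₀ v x).symm.trans <|
        (LinearEquiv.congr_fun (congrFun hβ v) _).trans (hπ'.equiv_apply hπ₀ v x)
    obtain rfl := RepOf.eq_of_surjective_hom π π' (fun v => (hπ v).1) hf
    exact Sigma.ext rfl (heq_of_eq (Subtype.ext (Hom.ext hf)))
  · refine ⟨⟨transportRep N fun v => (β v).symm, (transportHomInv N _).comp π₀,
      fun v => ⟨(β v).surjective.comp (hπ₀ v), LinearEquiv.ker_comp _ _⟩⟩, ?_⟩
    funext v
    refine LinearEquiv.ext fun y => ?_
    obtain ⟨x, rfl⟩ := hπ₀ v y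
    exact SameQuotient.equiv_apply hπ₀ _ v x

section TorsionPair

variable {T F : Rep Q K → Prop} {V U : Rep Q K}
  {ι₀ : Hom L W} {π₀ : Hom W N} {ι : Hom V W} {π : Hom W U}

theorem sameSubobject_and_sameQuotient_of_torsion
    (hHom : ∀ (M N : Rep Q K) (φ : Hom M N), T M → F N → ∀ v, φ.f v = 0)
    (hTL : T L) (hFN : F N) (hex₀ : IsExactPair ι₀ π₀)
    (hTV : T V) (hFU : F U) (hex : IsExactPair ι π) :
    SameSubobject ι₀ ι ∧ SameQuotient π₀ π := by
  -- `Hom(T, F) = 0` puts each of the two subobjects inside the other.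
  have hrange (v : Q.V) : range (ι.f v) = range (ι₀.f v) := by
    apply le_antisymm
    · rw [(hex₀ v).2.2]
      exact range_le_ker_iff.mpr (hHom _ _ (π₀.comp ι) hTV hFN v)
    · rw [(hex v).2.2]
      exact range_le_ker_iff.mpr (hHom _ _ (π.comp ι₀) hTL hFU v)
  exact ⟨fun v => ⟨(hex v).1, hrange v⟩,
    fun v => ⟨(hex v).2.1, by rw [← (hex v).2.2, hrange, (hex₀ v).2.2]⟩⟩

theorem isExactPair_of_sameSubobject_of_sameQuotient (hex₀ : IsExactPair ι₀ π₀)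
    (hι : SameSubobject ι₀ ι) (hπ : SameQuotient π₀ π) : IsExactPair ι π :=
  fun v => ⟨(hι v).1, (hπ v).1, by rw [(hι v).2, (hex₀ v).2.2, (hπ v).2]⟩

theorem chi_mul_chi_mul_epairs
    (hTiso : ∀ M N, repIso M N → (T M ↔ T N))
    (hFiso : ∀ M N, repIso M N → (F M ↔ F N))
    (hHom : ∀ (M N : Rep Q K) (φ : Hom M N), T M → F N → ∀ v, φ.f v = 0)
    (hTL : T L) (hFN : F N) (hex₀ : IsExactPair ι₀ π₀) (U V : Rep Q K) :
    chi F U * chi T V * (epairs U V W : ℚ) =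
      Nat.card {ι : Hom V W // SameSubobject ι₀ ι} *
        Nat.card {π : Hom W U // SameQuotient π₀ π} := by
  by_cases hTV : T V
  swap
  · have : IsEmpty {ι : Hom V W // SameSubobject ι₀ ι} :=
      ⟨fun ι => hTV ((hTiso _ _ (ι.2.repIso fun v => (hex₀ v).1)).mpr hTL)⟩
    simp [chi, hTV]
  by_cases hFU : F U
  swap
  · have : IsEmpty {π : Hom W U // SameQuotient π₀ π} :=
      ⟨fun π => hFU ((hFiso _ _ (π.2.repIso fun v => (hex₀ v).2.1)).mp hFN)⟩
    simp [chi, hFU]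
  simp only [chi, if_pos hTV, if_pos hFU, one_mul]
  rw [epairs, ← Nat.cast_mul, ← Nat.card_prod]
  exact congrArg Nat.cast <| Nat.card_congr <|
    (Equiv.subtypeEquivRight fun p =>
      ⟨sameSubobject_and_sameQuotient_of_torsion hHom hTL hFN hex₀ hTV hFU,
        fun h => isExactPair_of_sameSubobject_of_sameQuotient hex₀ h.1 h.2⟩).trans
    Equiv.subtypeProdEquivProd

end TorsionPair

/-- Let `(T, F)` be a torsion pair in the category of
finite-dimensional representations of a quiver `Q` over a finite field: `T, F` are
closed under isomorphism, `Hom(T, F) = 0`, and every module `M` sits in a (then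
automatically unique) short exact sequence `0 → L → M → N → 0` with `L ∈ T`, `N ∈ F`.
Then in the completed Hall algebra `H(Q)` one has `χ = χ(F)·χ(T)`
(recall `[U][V] = ∑ F^W_{UV} [W]`, where `V` is the submodule and `U` the quotient). -/
theorem stmt1 (Q : FQuiver) (K : Type) [Field K] [Fintype K]
    (T F : Rep Q K → Prop)
    (hTiso : ∀ M N, repIso M N → (T M ↔ T N))
    (hFiso : ∀ M N, repIso M N → (F M ↔ F N))
    (hHom : ∀ (M N : Rep Q K) (φ : Hom M N), T M → F N → ∀ v, φ.f v = 0)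
    (hSES : ∀ W : Rep Q K, ∃ (L N : Rep Q K) (ι : Hom L W) (π : Hom W N),
      T L ∧ F N ∧ IsExactPair ι π) :
    hmul (chi F) (chi T) = fun _ => (1 : ℚ) := by
  funext W
  obtain ⟨L, N, ι₀, π₀, hTL, hFN, hex₀⟩ := hSES W
  have hι₀ (v : Q.V) : Function.Injective (ι₀.f v) := (hex₀ v).1
  have hdim : (fun v => W.d v - L.d v) = N.d :=
    funext fun v => Nat.sub_eq_of_eq_add' (hex₀.d_add v).symm
  simp only [hmul, chi_mul_chi_mul_epairs hTiso hFiso hHom hTL hFN hex₀]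
  rw [finsum_eq_single _ L.d fun δ hδ => ?_, finsum_eq_if,
    if_pos fun v => Nat.le.intro (hex₀.d_add v), hdim]
  · let _ := Fintype.ofFinite (RepOf Q K L.d)
    let _ := Fintype.ofFinite (RepOf Q K N.d)
    simp only [finsum_eq_sum_of_fintype, ← Finset.sum_div, ← Finset.sum_mul_sum]
    rw_mod_cast [← Nat.card_sigma, ← Nat.card_sigma, card_sameSubobject hι₀,
      card_sameQuotient fun v => (hex₀ v).2.1]
    exact div_self (by positivity [glcard_pos (K := K) L.d, glcard_pos (K := K) N.d])
  · have (mV : RepOf Q K δ) : IsEmpty {ι : Hom mV.toRep W // SameSubobject ι₀ ι} :=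
      ⟨fun ι => hδ (ι.2.d_eq hι₀)⟩
    simp

end QP
end

section
/- Let (Q,W) be a QP with cut C, μ a slope function, and α a dimension vector such that (α,μ) is numb to C, meaning the vector bundle π: Rep_α(Q) → Rep_α(Q_C) restricts to a vector bundle over μ-semistable loci. Then |φ_ω(Rep^μ_α(Q))| = q^{⟨α,α⟩_C} · |Rep^μ_α(J(Q,W;C))|. -/
namespace QP

variable {Q : FQuiver} {K : Type} [Field K] [Fintype K]

/-- The slope `μ = σ/θ` of a dimension vector. -/
noncomputable def slope (σ θ : Q.V → ℤ) (α : Q.V → ℕ) : ℚ :=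
  (∑ v, (σ v : ℚ) * α v) / (∑ v, (θ v : ℚ) * α v)

/-- `μ`-semistability: `μ(dim L) ≤ μ(dim M)` for every nonzero subrepresentation. -/
def Semistable (σ θ : Q.V → ℤ) (M : Rep Q K) : Prop :=
  ∀ (L : Rep Q K) (ι : Hom L M), (∀ v, Function.Injective (ι.f v)) → L.d ≠ 0 →
    slope σ θ L.d ≤ slope σ θ M.d

end QP

namespace QP

/-- Walks (composable paths) in a quiver, from `a` to `b`. -/
inductive Walk (Q : FQuiver) : Q.V → Q.V → Type
  | nil (v : Q.V) : Walk Q v v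
  | cons {w : Q.V} (e : Q.E) (p : Walk Q (Q.tgt e) w) : Walk Q (Q.src e) w

variable {Q : FQuiver} {K : Type} [Field K] [Fintype K]

/-- Evaluation of a walk on a representation: the composite linear map. -/
noncomputable def Rep.evalWalk (M : Rep Q K) :
    ∀ {a b : Q.V}, Walk Q a b → ((Fin (M.d a) → K) →ₗ[K] (Fin (M.d b) → K))
  | _, _, .nil _ => LinearMap.id
  | _, _, .cons e p => (M.evalWalk p).comp (M.m e)

/-- The number of arrows of a walk lying in a set `C` of arrows. -/
def Walk.countIn (C : Set Q.E) [DecidablePred (· ∈ C)] :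
    ∀ {a b : Q.V}, Walk Q a b → ℕ
  | _, _, .nil _ => 0
  | _, _, .cons e p => (if e ∈ C then 1 else 0) + countIn C p

variable (Q K) in
/-- A potential: a finite linear combination of oriented cycles. -/
abbrev Potential := List (K × Σ v : Q.V, Walk Q v v)

/-- The trace function `ω(M) = tr W(M)` of a potential. -/
noncomputable def traceFn (W : Potential Q K) (M : Rep Q K) : K :=
  (W.map fun p => p.1 * LinearMap.trace K _ (M.evalWalk p.2.2)).sum

/-- `⟨α,β⟩_C = ∑_{c ∈ C} α(tc)·β(hc)`. -/
def cform (C : Set Q.E) [DecidablePred (· ∈ C)] (α β : Q.V → ℕ) : ℕ :=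
  ∑ e ∈ Finset.univ.filter (· ∈ C), α (Q.src e) * β (Q.tgt e)

/-- `N` is (the image in `Rep_α(Q_C)` of) a representation of the truncated Jacobian
algebra `J(Q,W;C)`: it is zero along the cut, and the trace function vanishes on the
whole fiber of the bundle `Rep_α(Q) → Rep_α(Q_C)` over `N` (equivalently, `N` satisfies
the Jacobian relations `∂_c W = 0`, `c ∈ C`). -/
def IsJacobiRep (W : Potential Q K) (C : Set Q.E) {α : Q.V → ℕ}
    (N : RepOf Q K α) : Prop :=
  (∀ e ∈ C, N e = 0) ∧
  ∀ M : RepOf Q K α, (∀ e ∉ C, M e = N e) → traceFn W M.toRep = 0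

end QP

namespace LinearMap

variable {K X : Type*} [Field K] [AddCommGroup X] [Module K X]

theorem natCard_fiber_zero_sub_natCard_fiber_one (T : X →ₗ[K] K) [Decidable (T = 0)] :
    (Nat.card {x // T x = 0} : ℤ) - Nat.card {x // T x = 1} =
      if T = 0 then (Nat.card X : ℤ) else 0 := by
  split_ifs with hT
  · subst hT
    simp
  · obtain ⟨x₁, hx₁⟩ := surjective_of_ne_zero hT 1
    have : {x // T x = 0} ≃ {x // T x = 1} :=
      (Equiv.addRight x₁).subtypeEquiv fun x => by simp [hx₁]
    rw [Nat.card_congr this, sub_self]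

end LinearMap

theorem Nat.card_subtype_prod_eq_sum {X B : Type*} [Finite X] [Fintype B] (P : X → B → Prop) :
    Nat.card {p : X × B // P p.1 p.2} = ∑ b, Nat.card {x // P x b} := by
  rw [← Nat.card_sigma]
  exact Nat.card_congr (((Equiv.prodComm X B).subtypeEquiv fun _ => Iff.rfl).trans
    (Equiv.subtypeProdEquivSigmaSubtype fun b x => P x b))

namespace QP

variable {Q : FQuiver} {K : Type} [Field K] {C : Set Q.E} [DecidablePred (· ∈ C)]
  {α : Q.V → ℕ}

/-- `evalWalk` of `m.toRep`, with source and target typed by `α` instead of `m.toRep.d`. -/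
noncomputable def RepOf.evalWalk (m : RepOf Q K α) {a a' : Q.V} (p : Walk Q a a') :
    (Fin (α a) → K) →ₗ[K] (Fin (α a') → K) :=
  m.toRep.evalWalk p

theorem RepOf.evalWalk_cons (m : RepOf Q K α) {w : Q.V} (e : Q.E) (p : Walk Q (Q.tgt e) w) :
    m.evalWalk (.cons e p) = (m.evalWalk p).comp (m e) := rfl

theorem RepOf.evalWalk_eq_of_countIn_eq_zero {m m' : RepOf Q K α} (h : ∀ e ∉ C, m e = m' e)
    {a a' : Q.V} {p : Walk Q a a'} (hp : Walk.countIn C p = 0) : m.evalWalk p = m'.evalWalk p := by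
  induction p with
  | nil v => rfl
  | cons e p ih =>
    by_cases he : e ∈ C
    · simp [Walk.countIn, he] at hp
    · simp only [Walk.countIn, he, if_false, zero_add] at hp
      rw [evalWalk_cons, evalWalk_cons, ih hp, h e he]

theorem RepOf.evalWalk_eq_smul_add_of_countIn_eq_one {m m' m'' : RepOf Q K α} (c : K)
    (hC : ∀ e ∈ C, m e = c • m' e + m'' e) (h' : ∀ e ∉ C, m e = m' e)
    (h'' : ∀ e ∉ C, m e = m'' e) {a a' : Q.V} {p : Walk Q a a'} (hp : Walk.countIn C p = 1) :
    m.evalWalk p = c • m'.evalWalk p + m''.evalWalk p := by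
  induction p with
  | nil v => simp [Walk.countIn] at hp
  | cons e p ih =>
    by_cases he : e ∈ C
    · simp only [Walk.countIn, he, if_true, add_eq_left] at hp
      rw [evalWalk_cons, evalWalk_cons, evalWalk_cons, hC e he,
        evalWalk_eq_of_countIn_eq_zero h' hp, evalWalk_eq_of_countIn_eq_zero
          (fun e he => (h' e he).symm.trans (h'' e he)) hp]
      simp only [LinearMap.comp_add, LinearMap.comp_smul]
    · simp only [Walk.countIn, he, if_false, zero_add] at hp
      rw [evalWalk_cons, evalWalk_cons, evalWalk_cons, ih hp, ← h' e he, ← h'' e he]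
      rfl

theorem traceFn_toRep (W : Potential Q K) (m : RepOf Q K α) :
    traceFn W m.toRep = (W.map fun p => p.1 * LinearMap.trace K _ (m.evalWalk p.2.2)).sum := rfl

theorem traceFn_eq_smul_add {W : Potential Q K} (hcut : ∀ p ∈ W, Walk.countIn C p.2.2 = 1)
    {m m' m'' : RepOf Q K α} (c : K) (hC : ∀ e ∈ C, m e = c • m' e + m'' e)
    (h' : ∀ e ∉ C, m e = m' e) (h'' : ∀ e ∉ C, m e = m'' e) :
    traceFn W m.toRep = c * traceFn W m'.toRep + traceFn W m''.toRep := by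
  have hterm : ∀ p ∈ W, p.1 * LinearMap.trace K _ (m.evalWalk p.2.2) =
      c * (p.1 * LinearMap.trace K _ (m'.evalWalk p.2.2)) +
        p.1 * LinearMap.trace K _ (m''.evalWalk p.2.2) := fun p hp => by
    rw [RepOf.evalWalk_eq_smul_add_of_countIn_eq_one c hC h' h'' (hcut p hp), map_add, map_smul,
      smul_eq_mul]
    ring
  rw [traceFn_toRep, traceFn_toRep, traceFn_toRep, List.map_congr_left hterm, List.sum_map_add,
    List.sum_map_mul_left]

section CutSplitting

variable (Q K C α)

abbrev RepFiber : Type :=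
  ∀ e : {e : Q.E // e ∈ C}, (Fin (α (Q.src e)) → K) →ₗ[K] (Fin (α (Q.tgt e)) → K)

abbrev RepBase : Type :=
  ∀ e : {e : Q.E // e ∉ C}, (Fin (α (Q.src e)) → K) →ₗ[K] (Fin (α (Q.tgt e)) → K)

variable {Q K C α}

def glue (x : RepFiber Q K C α) (b : RepBase Q K C α) : RepOf Q K α :=
  fun e => if h : e ∈ C then x ⟨e, h⟩ else b ⟨e, h⟩

theorem glue_of_mem (x : RepFiber Q K C α) (b : RepBase Q K C α) {e : Q.E} (h : e ∈ C) :
    glue x b e = x ⟨e, h⟩ := dif_pos h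

theorem glue_of_notMem (x : RepFiber Q K C α) (b : RepBase Q K C α) {e : Q.E} (h : e ∉ C) :
    glue x b e = b ⟨e, h⟩ := dif_neg h

def RepOf.base (m : RepOf Q K α) : RepBase Q K C α := fun e => m e

def RepOf.fiber (m : RepOf Q K α) : RepFiber Q K C α := fun e => m e

theorem glue_fiber_base (m : RepOf Q K α) : glue (m.fiber (C := C)) m.base = m := by
  funext e
  by_cases h : e ∈ C
  · exact glue_of_mem _ _ h
  · exact glue_of_notMem _ _ h

theorem base_glue (x : RepFiber Q K C α) (b : RepBase Q K C α) : (glue x b).base = b := by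
  funext ⟨e, h⟩
  exact glue_of_notMem x b h

theorem fiber_glue (x : RepFiber Q K C α) (b : RepBase Q K C α) : (glue x b).fiber = x := by
  funext ⟨e, h⟩
  exact glue_of_mem x b h

variable (Q K C α) in
def splitCut : RepOf Q K α ≃ RepFiber Q K C α × RepBase Q K C α where
  toFun m := (m.fiber, m.base)
  invFun p := glue p.1 p.2
  left_inv := glue_fiber_base
  right_inv p := Prod.ext (fiber_glue p.1 p.2) (base_glue p.1 p.2)

theorem glue_zero_base {N : RepOf Q K α} (h : ∀ e ∈ C, N e = 0) :
    glue 0 (N.base (C := C)) = N := by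
  funext e
  by_cases he : e ∈ C
  · rw [glue_of_mem _ _ he, h e he]
    rfl
  · exact glue_of_notMem _ _ he

theorem base_eq_of_agree_off_cut {m : RepOf Q K α} {b : RepBase Q K C α}
    (h : ∀ e ∉ C, m e = glue 0 b e) : m.base = b := by
  funext ⟨e, he⟩
  exact (h e he).trans (glue_of_notMem _ _ he)

theorem glue_agree_off_cut (x y : RepFiber Q K C α) (b : RepBase Q K C α) :
    ∀ e ∉ C, glue x b e = glue y b e := fun _ h => by
  rw [glue_of_notMem x b h, glue_of_notMem y b h]

theorem glue_smul_add_of_mem (c : K) (x y : RepFiber Q K C α) (b : RepBase Q K C α) :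
    ∀ e ∈ C, glue (c • x + y) b e = c • glue x b e + glue y b e := fun _ h => by
  rw [glue_of_mem _ _ h, glue_of_mem _ _ h, glue_of_mem _ _ h]
  rfl

end CutSplitting

variable {W : Potential Q K}

theorem traceFn_glue_smul_add (hcut : ∀ p ∈ W, Walk.countIn C p.2.2 = 1) (c : K)
    (x y : RepFiber Q K C α) (b : RepBase Q K C α) :
    traceFn W (glue (c • x + y) b).toRep =
      c * traceFn W (glue x b).toRep + traceFn W (glue y b).toRep :=
  traceFn_eq_smul_add hcut c (glue_smul_add_of_mem c x y b) (glue_agree_off_cut _ _ b)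
    (glue_agree_off_cut _ _ b)

variable (W) in
noncomputable def fiberTrace (hcut : ∀ p ∈ W, Walk.countIn C p.2.2 = 1) (b : RepBase Q K C α) :
    RepFiber Q K C α →ₗ[K] K :=
  have zero : traceFn W (glue 0 b).toRep = 0 := by
    have := traceFn_glue_smul_add hcut 1 0 0 b
    rw [smul_zero, zero_add, one_mul, left_eq_add] at this
    exact this
  { toFun x := traceFn W (glue x b).toRep
    map_add' x y := by simpa using traceFn_glue_smul_add hcut 1 x y b
    map_smul' c x := by simpa [zero] using traceFn_glue_smul_add hcut c x 0 b }

theorem isJacobiRep_glue_zero_iff (hcut : ∀ p ∈ W, Walk.countIn C p.2.2 = 1)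
    (b : RepBase Q K C α) : IsJacobiRep W C (glue 0 b) ↔ fiberTrace W hcut b = 0 := by
  refine ⟨fun h => LinearMap.ext fun x => h.2 _ (glue_agree_off_cut x 0 b),
    fun h => ⟨?_, ?_⟩⟩
  · intro e he
    rw [glue_of_mem _ _ he]
    rfl
  · intro M hM
    rw [← glue_fiber_base (C := C) M, base_eq_of_agree_off_cut hM]
    exact LinearMap.congr_fun h M.fiber

section Counting

variable [Fintype K]

instance : Finite (RepFiber Q K C α) := Module.finite_of_finite K

noncomputable instance : Fintype (RepBase Q K C α) :=
  have : Finite (RepBase Q K C α) := Module.finite_of_finite K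
  Fintype.ofFinite _

theorem natCard_repFiber : Nat.card (RepFiber Q K C α) = Fintype.card K ^ cform C α α := by
  rw [Module.natCard_eq_pow_finrank (K := K), Module.finrank_pi_fintype, Nat.card_eq_fintype_card]
  simp only [Module.finrank_linearMap, Module.finrank_fin_fun]
  exact congrArg _ (Finset.sum_subtype _ (by simp) fun e => α (Q.src e) * α (Q.tgt e)).symm

variable (hcut : ∀ p ∈ W, Walk.countIn C p.2.2 = 1) {σ θ : Q.V → ℤ}

theorem natCard_semistable_traceFn_eq
    (hnumb : ∀ m m' : RepOf Q K α, (∀ e ∉ C, m e = m' e) →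
      (Semistable σ θ m.toRep ↔ Semistable σ θ m'.toRep)) (t : K) :
    Nat.card {m : RepOf Q K α // Semistable σ θ m.toRep ∧ traceFn W m.toRep = t} =
      ∑ b : RepBase Q K C α,
        Nat.card {x // Semistable σ θ (glue 0 b).toRep ∧ fiberTrace W hcut b x = t} := by
  rw [← Nat.card_subtype_prod_eq_sum]
  refine Nat.card_congr ((splitCut Q K C α).subtypeEquiv fun m => ?_)
  change _ ↔ Semistable σ θ (glue 0 m.base).toRep ∧ fiberTrace W hcut m.base m.fiber = t
  have htrace : fiberTrace W hcut m.base m.fiber = traceFn W m.toRep :=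
    congrArg (fun m => traceFn W (RepOf.toRep m)) (glue_fiber_base m)
  rw [htrace]
  exact and_congr_left' (hnumb _ _ fun e he => (glue_of_notMem 0 m.base he).symm)

open Classical in
theorem natCard_semistable_fiberTrace_sub (b : RepBase Q K C α) :
    (Nat.card {x // Semistable σ θ (glue 0 b).toRep ∧ fiberTrace W hcut b x = 0} : ℤ) -
        Nat.card {x // Semistable σ θ (glue 0 b).toRep ∧ fiberTrace W hcut b x = 1} =
      if Semistable σ θ (glue 0 b).toRep ∧ fiberTrace W hcut b = 0
        then (Fintype.card K : ℤ) ^ cform C α α else 0 := by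
  by_cases hS : Semistable σ θ (glue 0 b).toRep
  · simp only [hS, true_and]
    rw [LinearMap.natCard_fiber_zero_sub_natCard_fiber_one, natCard_repFiber]
    push_cast
    rfl
  · simp [hS]

open Classical in
theorem natCard_semistable_isJacobiRep :
    Nat.card {N : RepOf Q K α // Semistable σ θ N.toRep ∧ IsJacobiRep W C N} =
      (Finset.univ.filter fun b : RepBase Q K C α =>
        Semistable σ θ (glue 0 b).toRep ∧ fiberTrace W hcut b = 0).card := by
  rw [← Fintype.card_subtype, ← Nat.card_eq_fintype_card]
  symm
  refine Nat.card_congr (Equiv.ofBijective (fun b => ⟨glue 0 b.1, b.2.1,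
    (isJacobiRep_glue_zero_iff hcut b.1).2 b.2.2⟩) ⟨fun b b' h => ?_, fun N => ?_⟩)
  · rw [Subtype.ext_iff, ← base_glue (C := C) 0 b.1, ← base_glue (C := C) 0 b'.1]
    exact congrArg (fun N : {N // _} => RepOf.base N.1) h
  · obtain ⟨N, hS, hJ⟩ := N
    have hN := glue_zero_base hJ.1
    refine ⟨⟨N.base, ?_, (isJacobiRep_glue_zero_iff hcut _).1 ?_⟩, Subtype.ext hN⟩ <;>
      rw [hN]
    exacts [hS, hJ]

end Counting

theorem stmt7_general (Q : FQuiver) (K : Type) [Field K] [Fintype K]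
    (W : Potential Q K) (C : Set Q.E) [DecidablePred (· ∈ C)]
    (hcut : ∀ p ∈ W, Walk.countIn C p.2.2 = 1)
    (σ θ : Q.V → ℤ)
    (α : Q.V → ℕ)
    (hnumb : ∀ m m' : RepOf Q K α, (∀ e ∉ C, m e = m' e) →
      (Semistable σ θ m.toRep ↔ Semistable σ θ m'.toRep)) :
    (Nat.card {m : RepOf Q K α //
          Semistable σ θ m.toRep ∧ traceFn W m.toRep = 0} : ℤ) -
        Nat.card {m : RepOf Q K α //
          Semistable σ θ m.toRep ∧ traceFn W m.toRep = 1} =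
      (Fintype.card K : ℤ) ^ cform C α α *
        Nat.card {N : RepOf Q K α //
          Semistable σ θ N.toRep ∧ IsJacobiRep W C N} := by
  classical
  rw [natCard_semistable_traceFn_eq hcut hnumb, natCard_semistable_traceFn_eq hcut hnumb,
    natCard_semistable_isJacobiRep hcut]
  push_cast
  rw [← Finset.sum_sub_distrib, Finset.sum_congr rfl fun b _ =>
    natCard_semistable_fiberTrace_sub hcut b, Finset.sum_ite, Finset.sum_const_zero, add_zero,
    Finset.sum_const, nsmul_eq_mul, mul_comm]

/-- Let `(Q,W)` be a QP with a cut `C`, `μ = σ/θ` a slope function and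
`α` a dimension vector such that `(α, μ)` is numb to `C`, i.e. the vector bundle
`π : Rep_α(Q) → Rep_α(Q_C)` restricts to the `μ`-semistable loci (semistability only
depends on the image under `π`).  Then
`|φ_ω(Rep^μ_α(Q))| = q^{⟨α,α⟩_C} · |Rep^μ_α(J(Q,W;C))|`. -/
theorem stmt7 (Q : FQuiver) (K : Type) [Field K] [Fintype K]
    (W : Potential Q K) (C : Set Q.E) [DecidablePred (· ∈ C)]
    (hcut : ∀ p ∈ W, Walk.countIn C p.2.2 = 1)
    (σ θ : Q.V → ℤ) (hθ : ∀ α : Q.V → ℕ, α ≠ 0 → 0 < ∑ v, θ v * α v)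
    (α : Q.V → ℕ)
    (hnumb : ∀ m m' : RepOf Q K α, (∀ e ∉ C, m e = m' e) →
      (Semistable σ θ m.toRep ↔ Semistable σ θ m'.toRep)) :
    (Nat.card {m : RepOf Q K α //
          Semistable σ θ m.toRep ∧ traceFn W m.toRep = 0} : ℤ) -
        Nat.card {m : RepOf Q K α //
          Semistable σ θ m.toRep ∧ traceFn W m.toRep = 1} =
      (Fintype.card K : ℤ) ^ cform C α α *
        Nat.card {N : RepOf Q K α //
          Semistable σ θ N.toRep ∧ IsJacobiRep W C N} :=
  stmt7_general Q K W C hcut σ θ α hnumb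

end QP
end

section
/- Let Λ be an m×m antisymmetric integer matrix and B an n×m integer matrix (m ≥ n) that are unitally compatible: BΛ = [−I_n, 0]. Let φ_k (1 ≤ k ≤ n) be the m×m reflection matrix of the mutation at k. Then the mutated pair (Λ', B') = (φ_k^T Λ φ_k, φ_k^p B φ_k^T) is again unitally compatible: B'Λ' = [−I_n, 0]. Moreover φ_k is an involution: φ_k² = I. -/
/-!
`φ_k` differs from the identity only in column `k`, whose `k`-th entry is `−1`; hence
`φ_k² = I`, and then `B'Λ' = φ_k^p (BΛ) φ_k = −φ_k^p R`, where `R` is the block of the first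
`n` rows of `φ_k`. These rows vanish outside the first `n` columns, so `φ_k^p R` is the block of
the first `n` rows of `φ_k² = I`, and `B'Λ' = [−I_n, 0]`.
-/

namespace CompatPair

open Matrix

variable {m n : ℕ}

/-- The `n × m` matrix `[−I_n, 0]`. -/
def negIZero (m n : ℕ) : Matrix (Fin n) (Fin m) ℤ :=
  Matrix.of fun i j => if (j : ℕ) = (i : ℕ) then -1 else 0

/-- The reflection matrix `φ_k` of the mutation at `k` (acting on row vectors, so that
`e_i ↦ e_i + [b_{ik}]_+ e_k` for `i ≠ k` and `e_k φ_k`-column carries the `−1`):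
the identity matrix except in the `k`-th column, where `(φ_k)_{ik} = [−b_{ki}]_+`
for `i ≠ k` and `(φ_k)_{kk} = −1`. -/
def phiMat (hmn : n ≤ m) (B : Matrix (Fin n) (Fin m) ℤ) (k : Fin n) :
    Matrix (Fin m) (Fin m) ℤ :=
  Matrix.of fun i j =>
    if j = Fin.castLE hmn k then
      (if i = Fin.castLE hmn k then -1 else max (-(B k i)) 0)
    else if i = j then 1 else 0

/-- The principal part (`n × n` upper-left corner) of an `m × m` matrix. -/
def princ (hmn : n ≤ m) (P : Matrix (Fin m) (Fin m) ℤ) : Matrix (Fin n) (Fin n) ℤ :=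
  Matrix.of fun i j => P (Fin.castLE hmn i) (Fin.castLE hmn j)

theorem updateCol_one_mul_self {ι R : Type*} [Ring R] [DecidableEq ι] [Fintype ι] (K : ι)
    (c : ι → R) (hc : c K = -1) :
    (1 : Matrix ι ι R).updateCol K c * (1 : Matrix ι ι R).updateCol K c = 1 := by
  have hv : (1 : Matrix ι ι R).updateCol K c *ᵥ c = Pi.single K 1 := by
    ext i
    rw [mulVec, dotProduct, Fintype.sum_eq_add_sum_compl K]
    rcases eq_or_ne i K with rfl | hi
    · simp [updateCol_apply, one_apply, hc, Finset.sum_ite_of_false]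
    · simp [updateCol_apply, one_apply, hc, hi, Finset.sum_ite_of_false]
  rw [mul_updateCol, Matrix.mul_one, updateCol_idem, hv]
  conv_rhs => rw [← updateCol_eq_self (1 : Matrix ι ι R) K]
  congr 1
  ext i
  simp [one_apply, Pi.single_apply]

theorem phiMat_eq_updateCol (hmn : n ≤ m) (B : Matrix (Fin n) (Fin m) ℤ) (k : Fin n) :
    phiMat hmn B k = (1 : Matrix (Fin m) (Fin m) ℤ).updateCol (Fin.castLE hmn k)
      (Function.update (fun i => max (-B k i) 0) (Fin.castLE hmn k) (-1)) := by
  ext i j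
  by_cases hj : j = Fin.castLE hmn k
  · subst hj
    by_cases hi : i = Fin.castLE hmn k <;> simp [phiMat, hi]
  · simp [phiMat, hj, one_apply]

theorem phiMat_mul_self (hmn : n ≤ m) (B : Matrix (Fin n) (Fin m) ℤ) (k : Fin n) :
    phiMat hmn B k * phiMat hmn B k = 1 := by
  rw [phiMat_eq_updateCol]
  exact updateCol_one_mul_self _ _ (Function.update_self ..)

theorem phiMat_castLE_apply_of_le (hmn : n ≤ m) (B : Matrix (Fin n) (Fin m) ℤ) (k i : Fin n)
    {t : Fin m} (ht : n ≤ t) : phiMat hmn B k (Fin.castLE hmn i) t = 0 := by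
  have hkt : t ≠ Fin.castLE hmn k := fun h => by simp [h] at ht; omega
  have hit : Fin.castLE hmn i ≠ t := fun h => by simp [← h] at ht; omega
  simp [phiMat, hkt, hit]

theorem submatrix_castLE_mul {α : Type*} (hmn : n ≤ m) (P : Matrix (Fin m) (Fin m) ℤ)
    (N : Matrix (Fin m) α ℤ) (hP : ∀ (i : Fin n) (t : Fin m), n ≤ t → P (Fin.castLE hmn i) t = 0) :
    (P * N).submatrix (Fin.castLE hmn) id = princ hmn P * N.submatrix (Fin.castLE hmn) id := by
  ext i j
  refine (Fintype.sum_of_injective (Fin.castLE hmn) (Fin.castLE_injective hmn) _ _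
    (fun t ht => ?_) (fun _ => rfl)).symm
  rw [Fin.range_castLE, Set.mem_ofPred_eq, not_lt] at ht
  simp [hP i t ht]

theorem negIZero_mul {α : Type*} (hmn : n ≤ m) (N : Matrix (Fin m) α ℤ) :
    negIZero m n * N = -N.submatrix (Fin.castLE hmn) id := by
  ext i j
  have hcast (t : Fin m) : (t : ℕ) = i ↔ t = Fin.castLE hmn i := by simp [Fin.ext_iff]
  simp [negIZero, mul_apply, hcast]

theorem stmt11_general (hmn : n ≤ m) (Λ : Matrix (Fin m) (Fin m) ℤ)
    (B : Matrix (Fin n) (Fin m) ℤ) (k : Fin n)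
    (hcompat : B * Λ = negIZero m n) :
    (princ hmn (phiMat hmn B k) * B * (phiMat hmn B k)ᵀ) *
        ((phiMat hmn B k)ᵀ * Λ * phiMat hmn B k) = negIZero m n ∧
    phiMat hmn B k * phiMat hmn B k = 1 := by
  set P := phiMat hmn B k
  have hPP : P * P = 1 := phiMat_mul_self hmn B k
  have hPTPT : Pᵀ * Pᵀ = 1 := by rw [← transpose_mul, hPP, transpose_one]
  refine ⟨?_, hPP⟩
  calc princ hmn P * B * Pᵀ * (Pᵀ * Λ * P)
      = princ hmn P * (B * (Pᵀ * Pᵀ) * Λ * P) := by simp only [Matrix.mul_assoc]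
    _ = princ hmn P * (negIZero m n * P) := by rw [hPTPT, Matrix.mul_one, hcompat]
    _ = -(P * P).submatrix (Fin.castLE hmn) id := by
      rw [negIZero_mul hmn, Matrix.mul_neg,
        submatrix_castLE_mul hmn P P (phiMat_castLE_apply_of_le hmn B k)]
    _ = negIZero m n := by rw [hPP, ← negIZero_mul hmn, Matrix.mul_one]

/-- Let `Λ` be an `m×m` antisymmetric integer matrix and `B` an
`n×m` integer matrix (`m ≥ n`, extending an antisymmetric principal part `B_p`,
with no loops) which are unitally compatible: `BΛ = [−I_n, 0]`.  Then the mutated pair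
`(Λ', B') = (φ_kᵀ Λ φ_k, φ_k^p B φ_kᵀ)` is again unitally compatible,
`B'Λ' = [−I_n, 0]`, and `φ_k` is an involution: `φ_k² = I`. -/
theorem stmt11 (hmn : n ≤ m) (Λ : Matrix (Fin m) (Fin m) ℤ)
    (B : Matrix (Fin n) (Fin m) ℤ) (k : Fin n)
    (hΛ : Λᵀ = -Λ)
    (hskew : ∀ i j : Fin n, B i (Fin.castLE hmn j) = -B j (Fin.castLE hmn i))
    (hcompat : B * Λ = negIZero m n) :
    (princ hmn (phiMat hmn B k) * B * (phiMat hmn B k)ᵀ) *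
        ((phiMat hmn B k)ᵀ * Λ * phiMat hmn B k) = negIZero m n ∧
    phiMat hmn B k * phiMat hmn B k = 1 :=
  stmt11_general hmn Λ B k hcompat

end CompatPair
end
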